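/- Let G be a group satisfying (H1), let A be a basal subgroup of G, and let H ∈ L(G) with C_G(H) = C_G(A). Then H ≤ R(A). (That is, the rigid normalizer R(A) is an upper bound for the equivalence class of A.) -/

import Mathlib

variable {G : Type*} [Group G]

/-- The conjugate `B ^ g = g⁻¹ * B * g` of a subgroup `B` by an element `g`. -/
def conjBy (B : Subgroup G) (g : G) : Subgroup G :=
  B.map (MulAut.conj g⁻¹).toMonoidHom

/-- A subgroup is virtually solvable if it has a solvable subgroup of finite index. -/
def VirtSolvable (H : Subgroup G) : Prop :=
  ∃ M : Subgroup G, M ≤ H ∧ M.relIndex H ≠ 0 ∧ IsSolvable ↥M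

/-- A subgroup is virtually nilpotent if it has a nilpotent subgroup of finite index. -/
def VirtNilpotent (H : Subgroup G) : Prop :=
  ∃ M : Subgroup G, M ≤ H ∧ M.relIndex H ≠ 0 ∧ Group.IsNilpotent ↥M

/-- Hypothesis (H1): every virtually solvable subgroup whose normalizer has finite index
(i.e. belonging to `L(G)`) is trivial. -/
def HypH1 (G : Type*) [Group G] : Prop :=
  ∀ H : Subgroup G, (Subgroup.normalizer (H : Set G)).FiniteIndex → VirtSolvable H → H = ⊥

/-- Hypothesis (H2): every nontrivial normal subgroup of `G` contains the derived subgroup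
of some finite-index subgroup of `G`. -/
def HypH2 (G : Type*) [Group G] : Prop :=
  ∀ N : Subgroup G, N.Normal → N ≠ ⊥ →
    ∃ G₀ : Subgroup G, G₀.FiniteIndex ∧ ⁅G₀, G₀⁆ ≤ N

/-- `VA K H` means `K ≤va H`: `K ≤ H` and `K` contains the derived subgroup of some
finite-index subgroup of `H`. -/
def VA (K H : Subgroup G) : Prop :=
  K ≤ H ∧ ∃ A : Subgroup G, A ≤ H ∧ A.relIndex H ≠ 0 ∧ ⁅A, A⁆ ≤ K

/-- A subgroup `B` is basal if its normalizer has finite index and every conjugate of `B`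
either equals `B` or meets `B` trivially. -/
def IsBasal (B : Subgroup G) : Prop :=
  (Subgroup.normalizer (B : Set G)).FiniteIndex ∧ ∀ g : G, conjBy B g = B ∨ conjBy B g ⊓ B = ⊥

/-- The rigid normalizer `R(A)` of a basal subgroup `A`: the intersection of the
normalizers of all basal subgroups meeting `A` trivially. -/
def rigidNormalizer (A : Subgroup G) : Subgroup G :=
  ⨅ B ∈ {B : Subgroup G | IsBasal B ∧ A ⊓ B = ⊥}, Subgroup.normalizer (B : Set G)

/-!
Let `B` be basal with `A ⊓ B = ⊥`, and put `A₀ = A ⊓ N(B)`, `B₀ = B ⊓ N(A)`. These have finite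
index in `A` and `B`, and they commute because `⁅A₀, B₀⁆ ≤ A ⊓ B`. Under (H1) a basal subgroup `K`
has the same centralizer as each finite-index subgroup `K₀ ∈ L(G)`: an element `c` centralizing `K₀`
normalizes `K` by basality, and for `k ∈ K` the element `k⁻¹ c⁻¹ k c` lies in `K` and centralizes
`V = K₀ ⊓ K₀ᵏ`, while (H1) forces `C(V) ⊓ K = ⊥` (the centre of `V` is abelian and `C(V) ⊓ K`
embeds in `K / V`). Hence `B₀ ≤ C(A₀) = C(A) = C(H)`, so `H ≤ C(B₀) = C(B) ≤ N(B)`.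
-/

section
open Subgroup
open scoped commutatorElement

lemma mem_conjBy {B : Subgroup G} {g x : G} : x ∈ conjBy B g ↔ g * x * g⁻¹ ∈ B := by
  constructor
  · rintro ⟨b, hb, rfl⟩
    simpa [MulAut.conj, mul_assoc] using hb
  · intro h
    exact ⟨g * x * g⁻¹, h, by simp [MulAut.conj, mul_assoc]⟩

lemma conjBy_eq_self_iff {B : Subgroup G} {g : G} :
    conjBy B g = B ↔ g ∈ normalizer (B : Set G) := by
  rw [mem_normalizer_iff, SetLike.ext_iff]
  simp only [mem_conjBy]
  exact forall_congr' fun _ => Iff.comm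

lemma finiteIndex_normalizer_conjBy {B : Subgroup G} (hB : (normalizer (B : Set G)).FiniteIndex)
    (g : G) : (normalizer (conjBy B g : Set G)).FiniteIndex := by
  unfold conjBy
  rw [← map_equiv_normalizer_eq]
  have hker : (MulAut.conj g⁻¹).toMonoidHom.ker = ⊥ :=
    (MonoidHom.ker_eq_bot_iff _).mpr (MulAut.conj g⁻¹).injective
  exact ⟨(index_map_eq _ (MulAut.conj g⁻¹).surjective (hker ▸ bot_le)).trans_ne
    hB.index_ne_zero⟩

lemma relIndex_conjBy (H K : Subgroup G) (g : G) :
    (conjBy H g).relIndex (conjBy K g) = H.relIndex K :=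
  relIndex_map_map_of_injective H K (MulAut.conj g⁻¹).injective

lemma finiteIndex_normalizer_inf {X Y : Subgroup G} (hX : (normalizer (X : Set G)).FiniteIndex)
    (hY : (normalizer (Y : Set G)).FiniteIndex) :
    (normalizer ((X ⊓ Y : Subgroup G) : Set G)).FiniteIndex :=
  finiteIndex_of_le (H := normalizer (X : Set G) ⊓ normalizer (Y : Set G))
    inf_normalizer_le_normalizer_inf

lemma normalizer_le_normalizer_centralizer (V : Subgroup G) :
    normalizer (V : Set G) ≤ normalizer (centralizer (V : Set G) : Set G) := by
  intro g hg x
  simp only [SetLike.mem_coe, mem_centralizer_iff]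
  constructor
  · intro hx v hv
    have hv' : g⁻¹ * v * g ∈ V := (mem_normalizer_iff''.mp hg v).mp hv
    calc v * (g * x * g⁻¹) = g * ((g⁻¹ * v * g) * x) * g⁻¹ := by group
      _ = (g * x * g⁻¹) * v := by rw [hx _ hv']; group
  · intro hx v hv
    have hv' : g * v * g⁻¹ ∈ V := (mem_normalizer_iff.mp hg v).mp hv
    calc v * x = g⁻¹ * ((g * v * g⁻¹) * (g * x * g⁻¹)) * g := by group
      _ = x * v := by rw [hx _ hv']; group

lemma finiteIndex_normalizer_centralizer_inf {V L : Subgroup G}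
    (hV : (normalizer (V : Set G)).FiniteIndex) (hL : (normalizer (L : Set G)).FiniteIndex) :
    (normalizer ((centralizer (V : Set G) ⊓ L : Subgroup G) : Set G)).FiniteIndex :=
  finiteIndex_normalizer_inf (finiteIndex_of_le (normalizer_le_normalizer_centralizer V)) hL

lemma commute_inv_mul_conj_of_commute {c k u : G} (hu : Commute c u)
    (hku : Commute c (k * u * k⁻¹)) : Commute (k⁻¹ * (c⁻¹ * k * c)) u :=
  calc k⁻¹ * (c⁻¹ * k * c) * u = k⁻¹ * c⁻¹ * k * (c * u) := by group
    _ = k⁻¹ * (c⁻¹ * (k * u * k⁻¹)) * k * c := by rw [hu.eq]; group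
    _ = k⁻¹ * ((k * u * k⁻¹) * c⁻¹) * k * c := by rw [hku.inv_left.eq]
    _ = u * (k⁻¹ * (c⁻¹ * k * c)) := by group

lemma inf_normalizer_le_centralizer_of_inf_eq_bot {A B : Subgroup G} (hAB : A ⊓ B = ⊥) :
    B ⊓ normalizer (A : Set G) ≤
      centralizer ((A ⊓ normalizer (B : Set G) : Subgroup G) : Set G) := by
  rintro b ⟨hbB, hbA⟩ a ⟨haA, haB⟩
  have hA : ⁅a, b⁆ ∈ A := by
    rw [commutatorElement_def, mul_assoc, mul_assoc, ← mul_assoc b]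
    exact mul_mem haA ((mem_normalizer_iff.mp hbA a⁻¹).mp (inv_mem haA))
  have hB : ⁅a, b⁆ ∈ B := by
    rw [commutatorElement_def]
    exact mul_mem ((mem_normalizer_iff.mp haB b).mp hbB) (inv_mem hbB)
  have : ⁅a, b⁆ ∈ A ⊓ B := ⟨hA, hB⟩
  rwa [hAB, mem_bot, commutatorElement_eq_one_iff_mul_comm] at this

lemma IsBasal.mem_normalizer_of_mem_centralizer {K K₀ : Subgroup G} (hK : IsBasal K)
    (hK₀K : K₀ ≤ K) (hne : K₀ ≠ ⊥) {c : G} (hc : c ∈ centralizer (K₀ : Set G)) :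
    c ∈ normalizer (K : Set G) := by
  refine conjBy_eq_self_iff.mp ((hK.2 c).resolve_right fun h => hne (le_bot_iff.mp ?_))
  rw [← h]
  refine le_inf (fun u hu => mem_conjBy.mpr ?_) hK₀K
  rw [← hc u hu, mul_inv_cancel_right]
  exact hK₀K hu

namespace HypH1

lemma eq_bot_of_le_centralizer (hH1 : HypH1 G) {Z : Subgroup G}
    (hZ : (normalizer (Z : Set G)).FiniteIndex) (hcomm : Z ≤ centralizer (Z : Set G)) :
    Z = ⊥ :=
  hH1 Z hZ ⟨Z, le_rfl, by simp, Group.isSolvable_of_comm fun a b => Subtype.ext (hcomm b.2 a a.2)⟩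

lemma eq_bot_of_finite (hH1 : HypH1 G) {W : Subgroup G}
    (hW : (normalizer (W : Set G)).FiniteIndex) [Finite W] : W = ⊥ :=
  hH1 W hW ⟨⊥, bot_le, by rw [relIndex_bot_left]; exact Nat.card_pos.ne',
    (inferInstance : Group.IsSolvable (⊥ : Subgroup G))⟩

lemma centralizer_inf_eq_bot (hH1 : HypH1 G) {V K : Subgroup G}
    (hV : (normalizer (V : Set G)).FiniteIndex) (hK : (normalizer (K : Set G)).FiniteIndex)
    (hVK : V.relIndex K ≠ 0) : centralizer (V : Set G) ⊓ K = ⊥ := by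
  have hZ : centralizer (V : Set G) ⊓ V = ⊥ :=
    hH1.eq_bot_of_le_centralizer (finiteIndex_normalizer_centralizer_inf hV hV)
      fun _ hz y hy => hz.1 y hy.2
  have hWV : centralizer (V : Set G) ⊓ K ⊓ V = ⊥ :=
    le_bot_iff.mp (hZ ▸ inf_le_inf_right V inf_le_left)
  have : Finite (centralizer (V : Set G) ⊓ K : Subgroup G) := by
    apply Nat.finite_of_card_ne_zero
    rw [← relIndex_bot_left, ← hWV, inf_relIndex_left]
    exact mt (relIndex_eq_zero_of_le_right inf_le_right) hVK
  exact hH1.eq_bot_of_finite (finiteIndex_normalizer_centralizer_inf hV hK)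

lemma commute_of_mem_normalizer (hH1 : HypH1 G) {K K₀ : Subgroup G}
    (hK : (normalizer (K : Set G)).FiniteIndex) (hK₀ : (normalizer (K₀ : Set G)).FiniteIndex)
    (hK₀K : K₀.relIndex K ≠ 0) {c k : G} (hc : c ∈ centralizer (K₀ : Set G))
    (hcK : c ∈ normalizer (K : Set G)) (hk : k ∈ K) : Commute c k := by
  set V := K₀ ⊓ conjBy K₀ k
  have hVK : V.relIndex K ≠ 0 := by
    refine relIndex_inf_ne_zero hK₀K ?_
    rwa [← conjBy_eq_self_iff.mpr (le_normalizer hk), relIndex_conjBy]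
  have hx : k⁻¹ * (c⁻¹ * k * c) ∈ centralizer (V : Set G) ⊓ K := by
    refine mem_inf.mpr
      ⟨fun u hu => ?_, mul_mem (inv_mem hk) ((mem_normalizer_iff''.mp hcK k).mp hk)⟩
    exact (commute_inv_mul_conj_of_commute (hc u hu.1 : Commute u c).symm
      (hc _ (mem_conjBy.mp hu.2) : Commute _ c).symm).symm.eq
  have hV : (normalizer (V : Set G)).FiniteIndex :=
    finiteIndex_normalizer_inf hK₀ (finiteIndex_normalizer_conjBy hK₀ k)
  rw [hH1.centralizer_inf_eq_bot hV hK hVK, mem_bot, inv_mul_eq_one] at hx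
  calc c * k = c * (c⁻¹ * k * c) := by rw [← hx]
    _ = k * c := by group

lemma centralizer_eq_of_isBasal (hH1 : HypH1 G) {K K₀ : Subgroup G} (hK : IsBasal K)
    (hK₀K : K₀ ≤ K) (hK₀ : (normalizer (K₀ : Set G)).FiniteIndex) (hrel : K₀.relIndex K ≠ 0) :
    centralizer (K₀ : Set G) = centralizer (K : Set G) := by
  rcases eq_or_ne K₀ ⊥ with rfl | hne
  · have : Finite K := Nat.finite_of_card_ne_zero (by rwa [relIndex_bot_left] at hrel)
    rw [hH1.eq_bot_of_finite hK.1]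
  · refine le_antisymm (fun c hc => mem_centralizer_iff.mpr fun k hk => ?_) (centralizer_le hK₀K)
    exact (hH1.commute_of_mem_normalizer hK.1 hK₀ hrel hc
      (hK.mem_normalizer_of_mem_centralizer hK₀K hne hc) hk).symm.eq

lemma centralizer_inf_normalizer (hH1 : HypH1 G) {K L : Subgroup G} (hK : IsBasal K)
    (hL : (normalizer (L : Set G)).FiniteIndex) :
    centralizer ((K ⊓ normalizer (L : Set G) : Subgroup G) : Set G) = centralizer (K : Set G) :=
  hH1.centralizer_eq_of_isBasal hK inf_le_left
    (finiteIndex_normalizer_inf hK.1 (finiteIndex_of_le le_normalizer))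
    (by rw [inf_relIndex_left]; exact mt index_eq_zero_of_relIndex_eq_zero hL.index_ne_zero)

end HypH1

end

theorem statement14_general (hH1 : HypH1 G) (A : Subgroup G) (hA : IsBasal A)
    (H : Subgroup G)
    (hc : Subgroup.centralizer (H : Set G) = Subgroup.centralizer (A : Set G)) :
    H ≤ rigidNormalizer A := by
  refine le_iInf₂ fun B ⟨hB, hAB⟩ => ?_
  have hB₀ : B ⊓ Subgroup.normalizer (A : Set G) ≤ Subgroup.centralizer (H : Set G) := by
    rw [hc, ← hH1.centralizer_inf_normalizer hA hB.1]
    exact inf_normalizer_le_centralizer_of_inf_eq_bot hAB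
  calc H ≤ Subgroup.centralizer ((B ⊓ Subgroup.normalizer (A : Set G) : Subgroup G) : Set G) :=
        Subgroup.le_centralizer_iff.mp hB₀
    _ = Subgroup.centralizer (B : Set G) := hH1.centralizer_inf_normalizer hB hA.1
    _ ≤ Subgroup.normalizer (B : Set G) := Subgroup.centralizer_le_normalizer _

theorem statement14 (hH1 : HypH1 G) (A : Subgroup G) (hA : IsBasal A)
    (H : Subgroup G) (hHL : (Subgroup.normalizer (H : Set G)).FiniteIndex)
    (hc : Subgroup.centralizer (H : Set G) = Subgroup.centralizer (A : Set G)) :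
    H ≤ rigidNormalizer A :=
  statement14_general hH1 A hA H hc
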